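/- arXiv:2103.07600 — 5 statements merged into one kernel-verified Lean document; each statement's English description precedes it below -/
import Mathlib

section
/- Let L ≥ 2 and layer dimensions d_0 = d_x, d_1, …, d_L = d_y. Let N ≥ d_x, let X_ε ∈ ℝ^{d_x×N} have rank d_x (so X_εX_εᵀ is invertible), let X ∈ ℝ^{d_x×N} and Y ∈ ℝ^{d_y×N}. Assume p := min_{0≤i≤L} d_i ≥ rank(Y X_εᵀ (X_εX_εᵀ)^{-1}). Fix i* ∈ {1,…,L}, λ > 0, and teacher weights (W̃_L,…,W̃_1) with W̃_i ∈ ℝ^{d_i×d_{i−1}} such that W̃_L⋯W̃_1 X = Y. Then: (i) global minimizers over all tuples (W_L,…,W_1) with W_i ∈ ℝ^{d_i×d_{i−1}} exist for both the base loss ‖W_L⋯W_1 X_ε − Y‖_F² and the student-teacher loss ‖W_L⋯W_1 X_ε − Y‖_F² + λ‖W_{i*}⋯W_1 X_ε − W̃_{i*}⋯W̃_1 X‖_F²; and (ii) every global minimizer of the base loss and every global minimizer of the student-teacher loss satisfies W_L⋯W_1 = Y X_εᵀ (X_εX_εᵀ)^{-1}. -/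
open Matrix

noncomputable section

/-- Squared Frobenius norm ‖M‖_F² of a real matrix. -/
def frobSq {m n : ℕ} (M : Matrix (Fin m) (Fin n) ℝ) : ℝ := ∑ i, ∑ j, (M i j) ^ 2

/-- End-to-end product `W_n ⋯ W_1` of the first `n` layers of a linear network with
layer dimensions `d 0, d 1, …` (layer `i+1` has weight `W i : ℝ^{d (i+1) × d i}`). -/
def layerProd (d : ℕ → ℕ) (W : ∀ i : ℕ, Matrix (Fin (d (i + 1))) (Fin (d i)) ℝ) :
    (n : ℕ) → Matrix (Fin (d n)) (Fin (d 0)) ℝ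
  | 0 => 1
  | n + 1 => W n * layerProd d W n

lemma frobSq_nonneg {m n : ℕ} (M : Matrix (Fin m) (Fin n) ℝ) : 0 ≤ frobSq M :=
  Finset.sum_nonneg fun _ _ => Finset.sum_nonneg fun _ _ => sq_nonneg _

lemma frobSq_eq_zero {m n : ℕ} {M : Matrix (Fin m) (Fin n) ℝ} (h : frobSq M = 0) : M = 0 := by
  ext i j
  have h1 := (Finset.sum_eq_zero_iff_of_nonneg
    (fun i _ => Finset.sum_nonneg fun j _ => sq_nonneg (M i j))).mp h i (Finset.mem_univ i)
  have h2 := (Finset.sum_eq_zero_iff_of_nonneg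
    (fun j _ => sq_nonneg (M i j))).mp h1 j (Finset.mem_univ j)
  simpa using pow_eq_zero_iff (n := 2) (by norm_num) |>.mp h2

lemma frobSq_add_of_orth {m n : ℕ} {U V : Matrix (Fin m) (Fin n) ℝ}
    (h : U * Vᵀ = 0) : frobSq (U + V) = frobSq U + frobSq V := by
  have hdot : ∑ i, ∑ j, U i j * V i j = 0 := by
    have : ∀ i, ∑ j, U i j * V i j = 0 := by
      intro i
      have := congrFun (congrFun h i) i
      simpa [Matrix.mul_apply] using this
    simp [this]
  have expand : frobSq (U + V) = frobSq U + frobSq V + 2 * (∑ i, ∑ j, U i j * V i j) := by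
    simp only [frobSq, Finset.mul_sum, ← Finset.sum_add_distrib, Matrix.add_apply]
    exact Finset.sum_congr rfl fun i _ => Finset.sum_congr rfl fun j _ => by ring
  rw [expand, hdot]; ring

lemma cancel_right {m k n : ℕ} {Xε : Matrix (Fin k) (Fin n) ℝ}
    (hdet : IsUnit (Xε * Xεᵀ).det) {A B : Matrix (Fin m) (Fin k) ℝ}
    (h : A * Xε = B * Xε) : A = B := by
  have key : ∀ C : Matrix (Fin m) (Fin k) ℝ, C * Xε * Xεᵀ * (Xε * Xεᵀ)⁻¹ = C := by
    intro C
    rw [Matrix.mul_assoc C Xε Xεᵀ, Matrix.mul_assoc, Matrix.mul_nonsing_inv _ hdet,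
      Matrix.mul_one]
  rw [← key A, ← key B, h]

lemma frobSq_decomp {m k n : ℕ} (Xε : Matrix (Fin k) (Fin n) ℝ)
    (hdet : IsUnit (Xε * Xεᵀ).det) (Z : Matrix (Fin m) (Fin n) ℝ)
    (A : Matrix (Fin m) (Fin k) ℝ) :
    frobSq (A * Xε - Z) =
      frobSq ((A - Z * Xεᵀ * (Xε * Xεᵀ)⁻¹) * Xε)
        + frobSq (Z * Xεᵀ * (Xε * Xεᵀ)⁻¹ * Xε - Z) := by
  set P := Z * Xεᵀ * (Xε * Xεᵀ)⁻¹ with hP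
  have hsymm : (Xε * Xεᵀ)ᵀ = Xε * Xεᵀ := by simp [Matrix.transpose_mul]
  have hinv : ((Xε * Xεᵀ)⁻¹)ᵀ = (Xε * Xεᵀ)⁻¹ := by
    rw [Matrix.transpose_nonsing_inv, hsymm]
  have horth : Xε * (P * Xε - Z)ᵀ = 0 := by
    have hPt : Pᵀ = (Xε * Xεᵀ)⁻¹ * (Xε * Zᵀ) := by
      rw [hP, Matrix.transpose_mul, Matrix.transpose_mul, hinv, Matrix.transpose_transpose,
        ]
    rw [Matrix.transpose_sub, Matrix.transpose_mul, Matrix.mul_sub, hPt,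
      ← Matrix.mul_assoc, ← Matrix.mul_assoc, Matrix.mul_nonsing_inv _ hdet,
      Matrix.one_mul, sub_self]
  have hsum : A * Xε - Z = (A - P) * Xε + (P * Xε - Z) := by
    rw [Matrix.sub_mul]; abel
  have horth2 : ((A - P) * Xε) * (P * Xε - Z)ᵀ = 0 := by
    rw [Matrix.mul_assoc, horth, Matrix.mul_zero]
  rw [hsum, frobSq_add_of_orth horth2]

lemma isUnit_det_of_rank {k n : ℕ} (Xε : Matrix (Fin k) (Fin n) ℝ) (h : Xε.rank = k) :
    IsUnit (Xε * Xεᵀ).det := by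
  have hr : (Xε * Xεᵀ).rank = k := by rw [Matrix.rank_self_mul_transpose, h]
  rw [← Matrix.isUnit_iff_isUnit_det, ← Matrix.mulVec_surjective_iff_isUnit]
  have htop : LinearMap.range (Xε * Xεᵀ).mulVecLin = ⊤ := by
    apply Submodule.eq_top_of_finrank_eq
    rw [Module.finrank_fintype_fun_eq_card, Fintype.card_fin]
    exact hr
  intro v
  obtain ⟨w, hw⟩ := LinearMap.range_eq_top.mp htop v
  exact ⟨w, by rw [← Matrix.mulVecLin_apply]; exact hw⟩

/-- for `N ≥ d_x`, full-rank noisy data, and a teacher interpolating the clean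
data, global minimizers of the base loss and of the student-teacher loss exist, and every
global minimizer of either loss has end-to-end map `Y X_εᵀ (X_ε X_εᵀ)⁻¹`. -/
theorem stmt0
    (L N : ℕ) (hL : 2 ≤ L)
    (d : ℕ → ℕ) (hN : d 0 ≤ N)
    (Xε X : Matrix (Fin (d 0)) (Fin N) ℝ)
    (Y : Matrix (Fin (d L)) (Fin N) ℝ)
    (hXε : Xε.rank = d 0)
    (hp : ∀ i ≤ L, (Y * Xεᵀ * (Xε * Xεᵀ)⁻¹).rank ≤ d i)
    (istar : ℕ) (histar1 : 1 ≤ istar) (histar2 : istar ≤ L)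
    (lam : ℝ) (hlam : 0 < lam)
    (Wt : ∀ i : ℕ, Matrix (Fin (d (i + 1))) (Fin (d i)) ℝ)
    (hteacher : layerProd d Wt L * X = Y) :
    (∃ W : ∀ i : ℕ, Matrix (Fin (d (i + 1))) (Fin (d i)) ℝ,
      ∀ W' : ∀ i : ℕ, Matrix (Fin (d (i + 1))) (Fin (d i)) ℝ,
        frobSq (layerProd d W L * Xε - Y) ≤ frobSq (layerProd d W' L * Xε - Y)) ∧
    (∃ W : ∀ i : ℕ, Matrix (Fin (d (i + 1))) (Fin (d i)) ℝ,
      ∀ W' : ∀ i : ℕ, Matrix (Fin (d (i + 1))) (Fin (d i)) ℝ,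
        frobSq (layerProd d W L * Xε - Y)
            + lam * frobSq (layerProd d W istar * Xε - layerProd d Wt istar * X)
          ≤ frobSq (layerProd d W' L * Xε - Y)
            + lam * frobSq (layerProd d W' istar * Xε - layerProd d Wt istar * X)) ∧
    (∀ W : ∀ i : ℕ, Matrix (Fin (d (i + 1))) (Fin (d i)) ℝ,
      (∀ W' : ∀ i : ℕ, Matrix (Fin (d (i + 1))) (Fin (d i)) ℝ,
        frobSq (layerProd d W L * Xε - Y) ≤ frobSq (layerProd d W' L * Xε - Y)) →
      layerProd d W L = Y * Xεᵀ * (Xε * Xεᵀ)⁻¹) ∧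
    (∀ W : ∀ i : ℕ, Matrix (Fin (d (i + 1))) (Fin (d i)) ℝ,
      (∀ W' : ∀ i : ℕ, Matrix (Fin (d (i + 1))) (Fin (d i)) ℝ,
        frobSq (layerProd d W L * Xε - Y)
            + lam * frobSq (layerProd d W istar * Xε - layerProd d Wt istar * X)
          ≤ frobSq (layerProd d W' L * Xε - Y)
            + lam * frobSq (layerProd d W' istar * Xε - layerProd d Wt istar * X)) →
      layerProd d W L = Y * Xεᵀ * (Xε * Xεᵀ)⁻¹) := by
  have hdet : IsUnit (Xε * Xεᵀ).det := isUnit_det_of_rank Xε hXε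
  -- the modified teacher network
  let M0 : Matrix (Fin (d 0)) (Fin (d 0)) ℝ := X * Xεᵀ * (Xε * Xεᵀ)⁻¹
  let Wstar : ∀ i : ℕ, Matrix (Fin (d (i + 1))) (Fin (d i)) ℝ :=
    fun i => Nat.casesOn (motive := fun i => Matrix (Fin (d (i + 1))) (Fin (d i)) ℝ) i
      (Wt 0 * M0) (fun j => Wt (j + 1))
  have hWs : ∀ n, 1 ≤ n → layerProd d Wstar n = layerProd d Wt n * M0 := by
    intro n hn
    induction n with
    | zero => omega
    | succ k ih =>
      cases k with
      | zero =>
        show Wstar 0 * layerProd d Wstar 0 = Wt 0 * layerProd d Wt 0 * M0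
        show (Wt 0 * M0) * (1 : Matrix (Fin (d 0)) (Fin (d 0)) ℝ)
          = Wt 0 * (1 : Matrix (Fin (d 0)) (Fin (d 0)) ℝ) * M0
        rw [Matrix.mul_one, Matrix.mul_one]
      | succ j =>
        have h1 := ih (by omega)
        show Wstar (j + 1) * layerProd d Wstar (j + 1)
          = Wt (j + 1) * layerProd d Wt (j + 1) * M0
        show Wt (j + 1) * layerProd d Wstar (j + 1)
          = Wt (j + 1) * layerProd d Wt (j + 1) * M0
        rw [h1, Matrix.mul_assoc]
  have hWsL : layerProd d Wstar L = Y * Xεᵀ * (Xε * Xεᵀ)⁻¹ := by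
    rw [hWs L (by omega), ← hteacher]
    simp only [M0, Matrix.mul_assoc]
  have hWsI : layerProd d Wstar istar
      = layerProd d Wt istar * X * Xεᵀ * (Xε * Xεᵀ)⁻¹ := by
    rw [hWs istar histar1]
    simp only [M0, Matrix.mul_assoc]
  -- lower bounds via Pythagoras
  have base_lb : ∀ A : Matrix (Fin (d L)) (Fin (d 0)) ℝ,
      frobSq (Y * Xεᵀ * (Xε * Xεᵀ)⁻¹ * Xε - Y) ≤ frobSq (A * Xε - Y) := by
    intro A
    rw [frobSq_decomp Xε hdet Y A]
    linarith [frobSq_nonneg ((A - Y * Xεᵀ * (Xε * Xεᵀ)⁻¹) * Xε)]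
  have st_lb : ∀ B : Matrix (Fin (d istar)) (Fin (d 0)) ℝ,
      frobSq (layerProd d Wt istar * X * Xεᵀ * (Xε * Xεᵀ)⁻¹ * Xε - layerProd d Wt istar * X)
        ≤ frobSq (B * Xε - layerProd d Wt istar * X) := by
    intro B
    rw [frobSq_decomp Xε hdet (layerProd d Wt istar * X) B]
    linarith [frobSq_nonneg ((B - layerProd d Wt istar * X * Xεᵀ * (Xε * Xεᵀ)⁻¹) * Xε)]
  have base_eq : ∀ A : Matrix (Fin (d L)) (Fin (d 0)) ℝ,
      frobSq (A * Xε - Y) ≤ frobSq (Y * Xεᵀ * (Xε * Xεᵀ)⁻¹ * Xε - Y) →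
      A = Y * Xεᵀ * (Xε * Xεᵀ)⁻¹ := by
    intro A h
    rw [frobSq_decomp Xε hdet Y A] at h
    have h0 : frobSq ((A - Y * Xεᵀ * (Xε * Xεᵀ)⁻¹) * Xε) = 0 :=
      le_antisymm (by linarith) (frobSq_nonneg _)
    have h1 := frobSq_eq_zero h0
    rw [Matrix.sub_mul] at h1
    exact cancel_right hdet (sub_eq_zero.mp h1)
  refine ⟨⟨Wstar, ?_⟩, ⟨Wstar, ?_⟩, ?_, ?_⟩
  · intro W'
    rw [hWsL]
    exact base_lb _
  · intro W'
    rw [hWsL, hWsI]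
    have h1 := base_lb (layerProd d W' L)
    have h2 := st_lb (layerProd d W' istar)
    have h3 := mul_le_mul_of_nonneg_left h2 hlam.le
    linarith
  · intro W hmin
    have h := hmin Wstar
    rw [hWsL] at h
    exact base_eq _ h
  · intro W hmin
    have h := hmin Wstar
    rw [hWsL, hWsI] at h
    have h2 := st_lb (layerProd d W istar)
    have h3 := mul_le_mul_of_nonneg_left h2 hlam.le
    exact base_eq _ (by linarith)
end
end

section
/- Let L ≥ 2 and layer dimensions d_0 = d_x, d_1, …, d_L = d_y with d_i ≥ min(d_x, d_y) for every i. Let N ≥ d_x, let X_ε ∈ ℝ^{d_x×N} have rank d_x, let X ∈ ℝ^{d_x×N} and Y ∈ ℝ^{d_y×N}. Fix i* ∈ {1,…,L}, λ > 0, and teacher weights (W̃_L,…,W̃_1) with W̃_i ∈ ℝ^{d_i×d_{i−1}} such that W̃_L⋯W̃_1 X = Y. Then every global minimizer of the base loss ‖W_L⋯W_1 X_ε − Y‖_F² and every global minimizer of the student-teacher loss ‖W_L⋯W_1 X_ε − Y‖_F² + λ‖W_{i*}⋯W_1 X_ε − W̃_{i*}⋯W̃_1 X‖_F² satisfies W_L⋯W_1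 = Y X_εᵀ (X_εX_εᵀ)^{-1}; in particular the products of the global minimizers of the two losses are identical. -/
open Matrix

noncomputable section

lemma isUnit_of_rank_eq {p : ℕ} (M : Matrix (Fin p) (Fin p) ℝ) (h : M.rank = p) :
    IsUnit M.det := by
  have hsurj : Function.Surjective M.mulVecLin := by
    rw [← LinearMap.range_eq_top]
    apply Submodule.eq_top_of_finrank_eq
    simpa [Matrix.rank] using h
  have hbij : Function.Bijective M.mulVecLin :=
    ⟨(LinearMap.injective_iff_surjective).2 hsurj, hsurj⟩
  have : IsUnit (Matrix.toLinAlgEquiv' M) := (Module.End.isUnit_iff _).2 hbij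
  rw [← Matrix.isUnit_iff_isUnit_det]
  exact (isUnit_map_iff (Matrix.toLinAlgEquiv' : Matrix (Fin p) (Fin p) ℝ ≃ₐ[ℝ] _) M).1 this

lemma trace_mul_transpose {m n : ℕ} (U V : Matrix (Fin m) (Fin n) ℝ) :
    (U * Vᵀ).trace = ∑ i, ∑ j, U i j * V i j := by
  simp [Matrix.trace, Matrix.mul_apply, Matrix.diag]

lemma frobSq_add {m n : ℕ} (U V : Matrix (Fin m) (Fin n) ℝ) :
    frobSq (U + V) = frobSq U + frobSq V + 2 * (U * Vᵀ).trace := by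
  simp only [frobSq, Matrix.add_apply, trace_mul_transpose, add_sq,
    Finset.sum_add_distrib, Finset.mul_sum]
  ring

/-- Least-squares decomposition. -/
lemma key_decomp {q p n : ℕ} (Xe : Matrix (Fin p) (Fin n) ℝ) (Y : Matrix (Fin q) (Fin n) ℝ)
    (hinv : IsUnit (Xe * Xeᵀ).det) (A : Matrix (Fin q) (Fin p) ℝ) :
    frobSq (A * Xe - Y) =
      frobSq ((A - Y * Xeᵀ * (Xe * Xeᵀ)⁻¹) * Xe)
        + frobSq (Y * Xeᵀ * (Xe * Xeᵀ)⁻¹ * Xe - Y) := by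
  set As := Y * Xeᵀ * (Xe * Xeᵀ)⁻¹ with hAs
  have hU : A * Xe - Y = (A - As) * Xe + (As * Xe - Y) := by
    rw [Matrix.sub_mul]; abel
  have h1 : Xe * (As * Xe - Y)ᵀ = 0 := by
    have h2 : (Xe * Xeᵀ) * (Xe * Xeᵀ)⁻¹ = 1 := Matrix.mul_nonsing_inv _ hinv
    have hAsT : Asᵀ = (Xe * Xeᵀ)⁻¹ * (Xe * Yᵀ) := by
      rw [hAs, Matrix.transpose_mul, Matrix.transpose_nonsing_inv, Matrix.transpose_mul,
        Matrix.transpose_mul, Matrix.transpose_transpose]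
    rw [Matrix.transpose_sub, Matrix.mul_sub, Matrix.transpose_mul, hAsT,
      ← Matrix.mul_assoc, ← Matrix.mul_assoc, h2, Matrix.one_mul, sub_self]
  have hcross : ((A - As) * Xe) * (As * Xe - Y)ᵀ = 0 := by
    rw [Matrix.mul_assoc, h1, Matrix.mul_zero]
  rw [hU, frobSq_add, hcross]
  simp [Matrix.trace]

lemma key_le {q p n : ℕ} (Xe : Matrix (Fin p) (Fin n) ℝ) (Y : Matrix (Fin q) (Fin n) ℝ)
    (hinv : IsUnit (Xe * Xeᵀ).det) (A : Matrix (Fin q) (Fin p) ℝ) :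
    frobSq (Y * Xeᵀ * (Xe * Xeᵀ)⁻¹ * Xe - Y) ≤ frobSq (A * Xe - Y) := by
  rw [key_decomp Xe Y hinv A]
  linarith [frobSq_nonneg ((A - Y * Xeᵀ * (Xe * Xeᵀ)⁻¹) * Xe)]

lemma key_eq {q p n : ℕ} (Xe : Matrix (Fin p) (Fin n) ℝ) (Y : Matrix (Fin q) (Fin n) ℝ)
    (hinv : IsUnit (Xe * Xeᵀ).det) (A : Matrix (Fin q) (Fin p) ℝ)
    (h : frobSq (A * Xe - Y) ≤ frobSq (Y * Xeᵀ * (Xe * Xeᵀ)⁻¹ * Xe - Y)) :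
    A = Y * Xeᵀ * (Xe * Xeᵀ)⁻¹ := by
  have hd := key_decomp Xe Y hinv A
  have hz : frobSq ((A - Y * Xeᵀ * (Xe * Xeᵀ)⁻¹) * Xe) = 0 := by
    have := frobSq_nonneg ((A - Y * Xeᵀ * (Xe * Xeᵀ)⁻¹) * Xe)
    linarith
  have h0 : (A - Y * Xeᵀ * (Xe * Xeᵀ)⁻¹) * Xe = 0 := frobSq_eq_zero hz
  have h1 : (A - Y * Xeᵀ * (Xe * Xeᵀ)⁻¹) * (Xe * Xeᵀ) * (Xe * Xeᵀ)⁻¹ = 0 := by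
    rw [← Matrix.mul_assoc, h0, Matrix.zero_mul, Matrix.zero_mul]
  rw [Matrix.mul_assoc, Matrix.mul_nonsing_inv _ hinv, Matrix.mul_one, sub_eq_zero] at h1
  exact h1

/-- Modify the first layer of `Wt` by precomposing with `Z`. -/
def modW (d : ℕ → ℕ) (Wt : ∀ i : ℕ, Matrix (Fin (d (i + 1))) (Fin (d i)) ℝ)
    (Z : Matrix (Fin (d 0)) (Fin (d 0)) ℝ) :
    ∀ i : ℕ, Matrix (Fin (d (i + 1))) (Fin (d i)) ℝ
  | 0 => Wt 0 * Z
  | (k + 1) => Wt (k + 1)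

lemma layerProd_modW (d : ℕ → ℕ) (Wt : ∀ i : ℕ, Matrix (Fin (d (i + 1))) (Fin (d i)) ℝ)
    (Z : Matrix (Fin (d 0)) (Fin (d 0)) ℝ) :
    ∀ n, 1 ≤ n → layerProd d (modW d Wt Z) n = layerProd d Wt n * Z := by
  intro n
  induction n with
  | zero => omega
  | succ k ih =>
    intro _
    rcases Nat.eq_zero_or_pos k with hk | hk
    · subst hk
      simp [layerProd, modW, Matrix.mul_one]
    · cases k with
      | zero => omega
      | succ m =>
        calc layerProd d (modW d Wt Z) (m + 2)
            = modW d Wt Z (m + 1) * layerProd d (modW d Wt Z) (m + 1) := rfl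
          _ = Wt (m + 1) * (layerProd d Wt (m + 1) * Z) := by rw [ih hk]; rfl
          _ = layerProd d Wt (m + 2) * Z := by
              rw [show layerProd d Wt (m + 2)
                    = Wt (m + 1) * layerProd d Wt (m + 1) from rfl, Matrix.mul_assoc]

/-- wide networks (`d_i ≥ min(d_x,d_y)` for all `i`), `N ≥ d_x`, full-rank noisy
data, teacher interpolating the clean data: every global minimizer of the base loss and every
global minimizer of the student-teacher loss has end-to-end map `Y X_εᵀ (X_ε X_εᵀ)⁻¹`; in
particular the end-to-end maps of minimizers of the two losses are identical. -/
theorem stmt1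
    (L N : ℕ) (hL : 2 ≤ L)
    (d : ℕ → ℕ) (hwide : ∀ i ≤ L, min (d 0) (d L) ≤ d i) (hN : d 0 ≤ N)
    (Xε X : Matrix (Fin (d 0)) (Fin N) ℝ)
    (Y : Matrix (Fin (d L)) (Fin N) ℝ)
    (hXε : Xε.rank = d 0)
    (istar : ℕ) (histar1 : 1 ≤ istar) (histar2 : istar ≤ L)
    (lam : ℝ) (hlam : 0 < lam)
    (Wt : ∀ i : ℕ, Matrix (Fin (d (i + 1))) (Fin (d i)) ℝ)
    (hteacher : layerProd d Wt L * X = Y) :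
    (∀ W : ∀ i : ℕ, Matrix (Fin (d (i + 1))) (Fin (d i)) ℝ,
      (∀ W' : ∀ i : ℕ, Matrix (Fin (d (i + 1))) (Fin (d i)) ℝ,
        frobSq (layerProd d W L * Xε - Y) ≤ frobSq (layerProd d W' L * Xε - Y)) →
      layerProd d W L = Y * Xεᵀ * (Xε * Xεᵀ)⁻¹) ∧
    (∀ W : ∀ i : ℕ, Matrix (Fin (d (i + 1))) (Fin (d i)) ℝ,
      (∀ W' : ∀ i : ℕ, Matrix (Fin (d (i + 1))) (Fin (d i)) ℝ,
        frobSq (layerProd d W L * Xε - Y)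
            + lam * frobSq (layerProd d W istar * Xε - layerProd d Wt istar * X)
          ≤ frobSq (layerProd d W' L * Xε - Y)
            + lam * frobSq (layerProd d W' istar * Xε - layerProd d Wt istar * X)) →
      layerProd d W L = Y * Xεᵀ * (Xε * Xεᵀ)⁻¹) ∧
    (∀ Wb Ws : ∀ i : ℕ, Matrix (Fin (d (i + 1))) (Fin (d i)) ℝ,
      (∀ W' : ∀ i : ℕ, Matrix (Fin (d (i + 1))) (Fin (d i)) ℝ,
        frobSq (layerProd d Wb L * Xε - Y) ≤ frobSq (layerProd d W' L * Xε - Y)) →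
      (∀ W' : ∀ i : ℕ, Matrix (Fin (d (i + 1))) (Fin (d i)) ℝ,
        frobSq (layerProd d Ws L * Xε - Y)
            + lam * frobSq (layerProd d Ws istar * Xε - layerProd d Wt istar * X)
          ≤ frobSq (layerProd d W' L * Xε - Y)
            + lam * frobSq (layerProd d W' istar * Xε - layerProd d Wt istar * X)) →
      layerProd d Wb L = layerProd d Ws L) := by
  have hdet : IsUnit (Xε * Xεᵀ).det := by
    apply isUnit_of_rank_eq
    rw [Matrix.rank_self_mul_transpose, hXε]
  set Z : Matrix (Fin (d 0)) (Fin (d 0)) ℝ := X * Xεᵀ * (Xε * Xεᵀ)⁻¹ with hZ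
  have hW'full : layerProd d (modW d Wt Z) L = Y * Xεᵀ * (Xε * Xεᵀ)⁻¹ := by
    rw [layerProd_modW d Wt Z L (by omega), hZ, ← Matrix.mul_assoc, ← Matrix.mul_assoc,
      hteacher]
  have hW'part : layerProd d (modW d Wt Z) istar
      = (layerProd d Wt istar * X) * Xεᵀ * (Xε * Xεᵀ)⁻¹ := by
    rw [layerProd_modW d Wt Z istar histar1, hZ, ← Matrix.mul_assoc, ← Matrix.mul_assoc]
  have P1 : ∀ W : ∀ i : ℕ, Matrix (Fin (d (i + 1))) (Fin (d i)) ℝ,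
      (∀ W' : ∀ i : ℕ, Matrix (Fin (d (i + 1))) (Fin (d i)) ℝ,
        frobSq (layerProd d W L * Xε - Y) ≤ frobSq (layerProd d W' L * Xε - Y)) →
      layerProd d W L = Y * Xεᵀ * (Xε * Xεᵀ)⁻¹ := by
    intro W hmin
    have h := hmin (modW d Wt Z)
    rw [hW'full] at h
    exact key_eq Xε Y hdet _ h
  have P2 : ∀ W : ∀ i : ℕ, Matrix (Fin (d (i + 1))) (Fin (d i)) ℝ,
      (∀ W' : ∀ i : ℕ, Matrix (Fin (d (i + 1))) (Fin (d i)) ℝ,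
        frobSq (layerProd d W L * Xε - Y)
            + lam * frobSq (layerProd d W istar * Xε - layerProd d Wt istar * X)
          ≤ frobSq (layerProd d W' L * Xε - Y)
            + lam * frobSq (layerProd d W' istar * Xε - layerProd d Wt istar * X)) →
      layerProd d W L = Y * Xεᵀ * (Xε * Xεᵀ)⁻¹ := by
    intro W hmin
    have h := hmin (modW d Wt Z)
    rw [hW'full, hW'part] at h
    set B := layerProd d Wt istar * X with hB
    have hlow : frobSq (B * Xεᵀ * (Xε * Xεᵀ)⁻¹ * Xε - B)
        ≤ frobSq (layerProd d W istar * Xε - B) := key_le Xε B hdet _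
    have hbase : frobSq (layerProd d W L * Xε - Y)
        ≤ frobSq (Y * Xεᵀ * (Xε * Xεᵀ)⁻¹ * Xε - Y) := by
      nlinarith [hlow, h, hlam]
    exact key_eq Xε Y hdet _ hbase
  exact ⟨P1, P2, fun Wb Ws h1 h2 => (P1 Wb h1).trans (P2 Ws h2).symm⟩
end
end

section
/- Let g, N ∈ ℕ with g ≥ 1, σ_ε > 0, K_x > 0, and t > 0. Let X ∈ ℝ^{N×g} be a fixed matrix whose columns satisfy ‖X_{:,j}‖₂² ≤ K_x · N for every j ∈ {1,…,g}. Let Z be an N×g random matrix whose entries are independent Gaussian random variables with mean 0 and variance σ_ε². Then with probability at least 1 − 2·exp(−t²/2), one has max_{1≤i,j≤g} |[ZᵀX]_{i,j}| / N ≤ σ_ε · √(K_x(t² + 4·log g)/N). -/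
/-!
Each entry `[ZᵀX]_{ij} = ∑_k X_{kj} Z_{ki}` is a weighted sum of independent centred Gaussians,
hence sub-Gaussian with variance proxy `σ² ‖X_{:,j}‖₂² ≤ σ² K_x N`. The Chernoff bound then gives
`P(|[ZᵀX]_{ij}| / N > σ √(K_x r / N)) ≤ 2 exp(-r/2)`; with `r = t² + 4 log g` the right-hand side
is `2 exp(-t²/2) / g²`, which pays exactly for a union bound over the `g²` entries.
-/

open MeasureTheory ProbabilityTheory Matrix Real
open scoped NNReal ENNReal

namespace ProbabilityTheory

variable {Ω : Type*} [MeasurableSpace Ω] {μ : Measure Ω}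

lemma HasSubgaussianMGF.mono {X : Ω → ℝ} {c d : ℝ≥0} (h : HasSubgaussianMGF X c μ)
    (hcd : c ≤ d) : HasSubgaussianMGF X d μ where
  integrable_exp_mul := h.integrable_exp_mul
  mgf_le t := (h.mgf_le t).trans (exp_le_exp.2 (by gcongr))

lemma HasSubgaussianMGF.measure_abs_ge_le {X : Ω → ℝ} {c : ℝ≥0}
    (h : HasSubgaussianMGF X c μ) {ε : ℝ} (hε : 0 ≤ ε) :
    μ.real {ω | ε ≤ |X ω|} ≤ 2 * exp (-ε ^ 2 / (2 * c)) := by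
  have hsplit : {ω | ε ≤ |X ω|} = {ω | ε ≤ X ω} ∪ {ω | ε ≤ (-X) ω} := by
    ext ω
    simp [le_abs', or_comm, le_neg]
  calc μ.real {ω | ε ≤ |X ω|}
      ≤ μ.real {ω | ε ≤ X ω} + μ.real {ω | ε ≤ (-X) ω} := hsplit ▸ measureReal_union_le _ _
    _ ≤ exp (-ε ^ 2 / (2 * c)) + exp (-ε ^ 2 / (2 * c)) :=
      add_le_add (h.measure_ge_le hε) (h.neg.measure_ge_le hε)
    _ = 2 * exp (-ε ^ 2 / (2 * c)) := by ring

lemma hasSubgaussianMGF_of_map_eq_gaussianReal {X : Ω → ℝ} {v : ℝ≥0}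
    (hX : μ.map X = gaussianReal 0 v) : HasSubgaussianMGF X v μ := by
  have hXm : AEMeasurable X μ := aemeasurable_of_map_neZero (by rw [hX]; infer_instance)
  rw [← HasSubgaussianMGF.id_map_iff hXm, hX]
  exact ⟨integrable_exp_mul_gaussianReal, fun t ↦ by simp [mgf_id_gaussianReal]⟩

lemma hasSubgaussianMGF_sum_mul_of_iIndepFun {ι : Type*} [Fintype ι] {Y : ι → Ω → ℝ}
    {v : ℝ≥0} (hindep : iIndepFun Y μ) (hY : ∀ k, μ.map (Y k) = gaussianReal 0 v)
    (a : ι → ℝ) :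
    HasSubgaussianMGF (fun ω ↦ ∑ k, a k * Y k ω) (∑ k, ‖a k‖₊ ^ 2 * v) μ := by
  have hindep' : iIndepFun (fun k ω ↦ a k * Y k ω) μ :=
    hindep.comp (fun k x ↦ a k * x) fun k ↦ measurable_const_mul (a k)
  refine HasSubgaussianMGF.sum_of_iIndepFun hindep' fun k _ ↦ ?_
  convert (hasSubgaussianMGF_of_map_eq_gaussianReal (hY k)).const_mul (a k) using 2
  ext
  show (‖a k‖₊ : ℝ) ^ 2 * v = a k ^ 2 * v
  rw [coe_nnnorm, Real.norm_eq_abs, sq_abs]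

lemma hasSubgaussianMGF_transpose_mul_apply {m n p : Type*} [Fintype m]
    {Z : Ω → Matrix m n ℝ} {v : ℝ≥0}
    (hindep : iIndepFun (fun (q : m × n) ω ↦ Z ω q.1 q.2) μ)
    (hZ : ∀ k i, μ.map (fun ω ↦ Z ω k i) = gaussianReal 0 v) (X : Matrix m p ℝ) (i : n) (j : p) :
    HasSubgaussianMGF (fun ω ↦ ((Z ω)ᵀ * X) i j) (∑ k, ‖X k j‖₊ ^ 2 * v) μ := by
  have hcol : iIndepFun (fun k ω ↦ Z ω k i) μ :=
    hindep.precomp (g := fun k ↦ (k, i)) fun _ _ h ↦ (Prod.ext_iff.1 h).1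
  simpa [Matrix.mul_apply, mul_comm] using
    hasSubgaussianMGF_sum_mul_of_iIndepFun hcol (fun k ↦ hZ k i) (fun k ↦ X k j)

lemma ofReal_one_sub_le_measure_iInter [IsProbabilityMeasure μ] {ι : Type*} [Fintype ι]
    {A : ι → Set Ω} {δ : ℝ} (h : ∀ i, μ.real (A i)ᶜ ≤ δ) :
    ENNReal.ofReal (1 - Fintype.card ι * δ) ≤ μ (⋂ i, A i) := by
  rw [ENNReal.ofReal_le_iff_le_toReal (measure_ne_top _ _), ← measureReal_def]
  have hcompl : μ.real (⋂ i, A i)ᶜ ≤ Fintype.card ι * δ := by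
    rw [Set.compl_iInter]
    calc μ.real (⋃ i, (A i)ᶜ) ≤ ∑ i, μ.real (A i)ᶜ := measureReal_iUnion_fintype_le _
      _ ≤ ∑ _i : ι, δ := Finset.sum_le_sum fun i _ ↦ h i
      _ = Fintype.card ι * δ := by simp
  have hunion := measureReal_union_le (μ := μ) (⋂ i, A i) (⋂ i, A i)ᶜ
  rw [Set.union_compl_self, probReal_univ] at hunion
  linarith

lemma measure_abs_transpose_mul_apply_div_gt_le [IsFiniteMeasure μ] {n p : Type*} {N : ℕ}
    {Z : Ω → Matrix (Fin N) n ℝ} {σ Kx r : ℝ} (hσ : 0 < σ) (hK : 0 < Kx) (hr : 0 ≤ r)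
    (hindep : iIndepFun (fun (q : Fin N × n) ω ↦ Z ω q.1 q.2) μ)
    (hZ : ∀ k i, μ.map (fun ω ↦ Z ω k i) = gaussianReal 0 (σ ^ 2).toNNReal)
    (X : Matrix (Fin N) p ℝ) (hX : ∀ j, ∑ k, X k j ^ 2 ≤ Kx * N) (i : n) (j : p) :
    μ.real {ω | σ * √(Kx * r / N) < |((Z ω)ᵀ * X) i j| / N} ≤ 2 * exp (-r / 2) := by
  rcases N.eq_zero_or_pos with rfl | hN
  · simp only [CharP.cast_eq_zero, div_zero, sqrt_zero, mul_zero, lt_self_iff_false,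
      Set.ofPred_false, measureReal_empty]
    positivity
  have hNr : (0 : ℝ) < N := Nat.cast_pos.2 hN
  set b := σ * √(Kx * r / N)
  have hC : ∑ k, ‖X k j‖₊ ^ 2 * (σ ^ 2).toNNReal ≤ (Kx * N).toNNReal * (σ ^ 2).toNNReal := by
    rw [← Finset.sum_mul]
    gcongr
    rw [Real.le_toNNReal_iff_coe_le (by positivity)]
    simpa using hX j
  have hsubG := (hasSubgaussianMGF_transpose_mul_apply hindep hZ X i j).mono hC
  calc μ.real {ω | b < |((Z ω)ᵀ * X) i j| / N}
      ≤ μ.real {ω | N * b ≤ |((Z ω)ᵀ * X) i j|} :=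
        measureReal_mono fun ω hω ↦ by
          rw [Set.mem_ofPred_eq, lt_div_iff₀ hNr] at hω
          rw [Set.mem_ofPred_eq, mul_comm]
          exact hω.le
    _ ≤ 2 * exp (-(N * b) ^ 2 / (2 * ((Kx * N).toNNReal * (σ ^ 2).toNNReal : ℝ≥0))) :=
        hsubG.measure_abs_ge_le (by positivity)
    _ = 2 * exp (-r / 2) := by
        rw [NNReal.coe_mul, Real.coe_toNNReal _ (by positivity),
          Real.coe_toNNReal _ (by positivity), mul_pow, mul_pow, sq_sqrt (by positivity)]
        field_simp

end ProbabilityTheory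

theorem stmt11_general
    {Ω : Type*} [MeasurableSpace Ω] (P : Measure Ω) [IsProbabilityMeasure P]
    (g N : ℕ) (hg : 1 ≤ g)
    (σe Kx t : ℝ) (hσ : 0 < σe) (hK : 0 < Kx)
    (X : Matrix (Fin N) (Fin g) ℝ)
    (hX : ∀ j, ∑ i, (X i j) ^ 2 ≤ Kx * N)
    (Z : Ω → Matrix (Fin N) (Fin g) ℝ)
    (hZindep : iIndepFun
      (fun (p : Fin N × Fin g) ω => Z ω p.1 p.2) P)
    (hZgauss : ∀ i j,
      Measure.map (fun ω => Z ω i j) P = gaussianReal 0 (Real.toNNReal (σe ^ 2))) :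
    ENNReal.ofReal (1 - 2 * Real.exp (-t ^ 2 / 2)) ≤
      P {ω | ∀ i j : Fin g, |((Z ω)ᵀ * X) i j| / N
        ≤ σe * Real.sqrt (Kx * (t ^ 2 + 4 * Real.log g) / N)} := by
  have hgR : (1 : ℝ) ≤ g := Nat.one_le_cast.2 hg
  have hentry : ∀ q : Fin g × Fin g, P.real {ω | |((Z ω)ᵀ * X) q.1 q.2| / N
      ≤ σe * √(Kx * (t ^ 2 + 4 * log g) / N)}ᶜ ≤ 2 * exp (-t ^ 2 / 2) / (g * g) := by
    rintro ⟨i, j⟩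
    have hexp : exp (-(t ^ 2 + 4 * log g) / 2) = exp (-t ^ 2 / 2) / (g * g) := by
      rw [show -(t ^ 2 + 4 * log g) / 2 = -t ^ 2 / 2 - (log g + log g) by ring, exp_sub,
        exp_add, exp_log (by linarith)]
    have htail := measure_abs_transpose_mul_apply_div_gt_le (r := t ^ 2 + 4 * log g) hσ hK
      (by positivity [log_nonneg hgR]) hZindep hZgauss X hX i j
    rw [hexp, ← mul_div_assoc] at htail
    simpa only [Set.compl_ofPred, not_le] using htail
  calc ENNReal.ofReal (1 - 2 * exp (-t ^ 2 / 2))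
      = ENNReal.ofReal (1 - Fintype.card (Fin g × Fin g) * (2 * exp (-t ^ 2 / 2) / (g * g))) := by
        simp only [Fintype.card_prod, Fintype.card_fin, Nat.cast_mul]
        field_simp
    _ ≤ _ := ofReal_one_sub_le_measure_iInter hentry
    _ = _ := by
        congr 1
        ext ω
        simp [Prod.forall]

/-- for a fixed matrix `X ∈ ℝ^{N×g}` with columns of squared norm at most
`K_x N`, and a random matrix `Z` with independent `N(0, σ_ε²)` entries, with probability at
least `1 − 2 exp(−t²/2)` one has
`max_{i,j} |[ZᵀX]_{i,j}| / N ≤ σ_ε √(K_x (t² + 4 log g) / N)`. -/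
theorem stmt11
    {Ω : Type*} [MeasurableSpace Ω] (P : Measure Ω) [IsProbabilityMeasure P]
    (g N : ℕ) (hg : 1 ≤ g)
    (σe Kx t : ℝ) (hσ : 0 < σe) (hK : 0 < Kx) (ht : 0 < t)
    (X : Matrix (Fin N) (Fin g) ℝ)
    (hX : ∀ j, ∑ i, (X i j) ^ 2 ≤ Kx * N)
    (Z : Ω → Matrix (Fin N) (Fin g) ℝ)
    (hZindep : iIndepFun
      (fun (p : Fin N × Fin g) ω => Z ω p.1 p.2) P)
    (hZgauss : ∀ i j,
      Measure.map (fun ω => Z ω i j) P = gaussianReal 0 (Real.toNNReal (σe ^ 2))) :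
    ENNReal.ofReal (1 - 2 * Real.exp (-t ^ 2 / 2)) ≤
      P {ω | ∀ i j : Fin g, |((Z ω)ᵀ * X) i j| / N
        ≤ σe * Real.sqrt (Kx * (t ^ 2 + 4 * Real.log g) / N)} :=
  stmt11_general P g N hg σe Kx t hσ hK X hX Z hZindep hZgauss
end

section
/- Let x be a random vector in ℝ^d whose coordinates are independent standard Gaussian random variables (mean 0, variance 1). Then for every δ ≥ 0: ℙ(‖x‖₂² ≥ d + δ) ≤ ((d + δ)/d)^{d/2} · exp(−δ/2). -/
/-!
For `t < 1/2` a Gaussian integral gives `𝔼 exp (t X²) = (1 - 2t)^(-1/2)` when `X ~ N(0, 1)`,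
so by independence `𝔼 exp (t ‖x‖²) = (1 - 2t)^(-d/2)`. Markov's inequality applied to
`exp (t ‖x‖²)` bounds the tail by `exp (-t (d + δ)) (1 - 2t)^(-d/2)`, and the choice
`t = δ / (2 (d + δ))` turns this into `((d + δ)/d)^(d/2) exp (-δ/2)`.
-/

open MeasureTheory ProbabilityTheory Real
open scoped NNReal

namespace ProbabilityTheory

lemma mgf_sq_gaussianReal {v : ℝ≥0} {t : ℝ} (ht : 2 * v * t < 1) :
    mgf (fun y => y ^ 2) (gaussianReal 0 v) t = (1 - 2 * v * t) ^ (-(1 / 2) : ℝ) := by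
  rcases eq_or_ne v 0 with rfl | hv
  · simp [gaussianReal_zero_var, mgf]
  have hdens (y : ℝ) : gaussianPDFReal 0 v y • exp (t * y ^ 2)
      = (√(2 * π * v))⁻¹ * exp (-((1 - 2 * v * t) / (2 * v)) * y ^ 2) := by
    rw [gaussianPDFReal, smul_eq_mul, mul_assoc, ← exp_add]
    congr 2
    field_simp
    ring
  rw [mgf, integral_gaussianReal_eq_integral_smul hv]
  simp_rw [hdens]
  rw [integral_const_mul, integral_gaussian, rpow_neg (by linarith), ← sqrt_eq_rpow,
    ← sqrt_inv, ← sqrt_inv, ← sqrt_mul (by positivity)]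
  congr 1
  field_simp

variable {Ω ι : Type*} [MeasurableSpace Ω] {P : Measure Ω} {X : ι → Ω → ℝ} {v : ℝ≥0} {t : ℝ}

lemma iIndepFun.mgf_sum_sq_gaussianReal (hX : iIndepFun X P)
    (hlaw : ∀ i, P.map (X i) = gaussianReal 0 v) (ht : 2 * v * t < 1) (s : Finset ι) :
    mgf (fun ω => ∑ i ∈ s, X i ω ^ 2) P t = (1 - 2 * v * t) ^ (-(s.card / 2) : ℝ) := by
  have hmeas (i : ι) : AEMeasurable (X i) P :=
    aemeasurable_of_map_neZero (by rw [hlaw i]; infer_instance)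
  have hsq (i : ι) : mgf (fun ω => X i ω ^ 2) P t = (1 - 2 * v * t) ^ (-(1 / 2) : ℝ) := by
    rw [← mgf_sq_gaussianReal ht, ← hlaw i, mgf_map (hmeas i) (by fun_prop)]
    rfl
  have hsum := (hX.comp (fun _ y => y ^ 2) fun _ => by fun_prop).mgf_sum₀
    (fun i => (hmeas i).pow_const 2) s (t := t)
  calc mgf (fun ω => ∑ i ∈ s, X i ω ^ 2) P t = ∏ i ∈ s, mgf (fun ω => X i ω ^ 2) P t := by
        simpa only [Finset.sum_fn, Function.comp_def] using hsum
    _ = (1 - 2 * v * t) ^ (-(s.card / 2) : ℝ) := by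
      rw [Finset.prod_congr rfl fun i _ => hsq i, Finset.prod_const, ← rpow_natCast,
        ← rpow_mul (by linarith)]
      ring_nf

lemma iIndepFun.measureReal_sum_sq_ge_le (hX : iIndepFun X P)
    (hlaw : ∀ i, P.map (X i) = gaussianReal 0 v) (ht₀ : 0 ≤ t) (ht : 2 * v * t < 1)
    (s : Finset ι) (a : ℝ) :
    P.real {ω | a ≤ ∑ i ∈ s, X i ω ^ 2}
      ≤ exp (-t * a) * (1 - 2 * v * t) ^ (-(s.card / 2) : ℝ) := by
  have := hX.isProbabilityMeasure
  have hmgf := hX.mgf_sum_sq_gaussianReal hlaw ht s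
  have hint : Integrable (fun ω => exp (t * ∑ i ∈ s, X i ω ^ 2)) P :=
    .of_integral_ne_zero (by rw [← mgf, hmgf]; exact (rpow_pos_of_pos (by linarith) _).ne')
  rw [← hmgf]
  exact measure_ge_le_exp_mul_mgf a ht₀ hint

end ProbabilityTheory

/-- for a standard Gaussian vector `x` in ℝ^d (independent `N(0,1)`
coordinates) and any `δ ≥ 0`:
`ℙ(‖x‖₂² ≥ d + δ) ≤ ((d + δ)/d)^{d/2} exp(−δ/2)`. -/
theorem stmt12
    {Ω : Type*} [MeasurableSpace Ω] (P : Measure Ω) [IsProbabilityMeasure P]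
    (d : ℕ) (x : Ω → Fin d → ℝ)
    (hind : iIndepFun (fun i ω => x ω i) P)
    (hgauss : ∀ i, Measure.map (fun ω => x ω i) P = gaussianReal 0 1)
    (δ : ℝ) (hδ : 0 ≤ δ) :
    P {ω | (d : ℝ) + δ ≤ ∑ i, (x ω i) ^ 2}
      ≤ ENNReal.ofReal ((((d : ℝ) + δ) / d) ^ ((d : ℝ) / 2) * Real.exp (-δ / 2)) := by
  rcases Nat.eq_zero_or_pos d with rfl | hd
  · rcases hδ.eq_or_lt with rfl | hδ
    · simp
    · simp [hδ.not_ge]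
  have hd : (0 : ℝ) < d := by exact_mod_cast hd
  -- the minimiser of `t ↦ exp (-t (d + δ)) (1 - 2 t) ^ (-d / 2)`
  set t := δ / (2 * (d + δ)) with ht
  have hchernoff := hind.measureReal_sum_sq_ge_le hgauss (v := 1) (t := t) (by positivity)
    (by rw [ht, NNReal.coe_one]; field_simp; linarith) Finset.univ (d + δ)
  have hexp : -t * (d + δ) = -δ / 2 := by rw [ht]; field_simp
  have hbase : 1 - 2 * ((1 : ℝ≥0) : ℝ) * t = ((d + δ) / d)⁻¹ := by
    rw [ht, NNReal.coe_one, inv_div]; field_simp; ring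
  rw [Finset.card_univ, Fintype.card_fin, hexp, hbase, rpow_neg (by positivity),
    inv_rpow (by positivity), inv_inv, mul_comm] at hchernoff
  rw [← ofReal_measureReal]
  exact ENNReal.ofReal_le_ofReal (by simpa only [neg_div] using hchernoff)
end

section
/- Let x be a random vector in ℝ^d whose coordinates are independent standard Gaussian random variables (mean 0, variance 1). Then for every ε ∈ (0,1): ℙ(‖x‖₂² ≥ d/(1−ε)) ≤ exp(−ε²·d/4). -/
/-!
Chernoff bound for the χ²-distribution. For a standard Gaussian `y` and `t < 1/2`,
`𝔼 exp (t y²) = (1 - 2t)^{-1/2}`, so by independence and Markov's inequality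
`ℙ(‖x‖² ≥ a) ≤ exp (-t a) (1 - 2t)^{-d/2}`. Taking `t = ε/2` and `a = d/(1-ε)`, the bound
`-log (1 - ε) ≤ ε/(1 - ε) - ε²/2` turns the right-hand side into
`exp (-ε² d/4)`.
-/

open MeasureTheory ProbabilityTheory Real

lemma gaussianPDFReal_zero_one_mul_exp_mul_sq (t y : ℝ) :
    gaussianPDFReal 0 1 y * exp (t * y ^ 2) = (√(2 * π))⁻¹ * exp (-(1 / 2 - t) * y ^ 2) := by
  rw [gaussianPDFReal, NNReal.coe_one, mul_assoc, ← exp_add]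
  ring_nf

lemma mgf_sq_gaussianReal {t : ℝ} (ht : t < 1 / 2) :
    mgf (fun y => y ^ 2) (gaussianReal 0 1) t = (√(1 - 2 * t))⁻¹ := by
  have h2t : 0 < 1 - 2 * t := by linarith
  have hπ : π / (1 / 2 - t) = 2 * π / (1 - 2 * t) := by field_simp
  rw [mgf, integral_gaussianReal_eq_integral_smul one_ne_zero]
  simp_rw [smul_eq_mul, gaussianPDFReal_zero_one_mul_exp_mul_sq, integral_const_mul,
    integral_gaussian, hπ, sqrt_div' _ h2t.le]
  field_simp

lemma neg_log_one_sub_le {ε : ℝ} (hε0 : 0 ≤ ε) (hε1 : ε < 1) :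
    -log (1 - ε) ≤ ε / (1 - ε) - ε ^ 2 / 2 := by
  have h1ε : 0 < 1 - ε := by linarith
  have hseries := abs_log_sub_add_sum_range_le (x := ε) (by rwa [abs_of_nonneg hε0]) 2
  simp only [Finset.sum_range_succ, Finset.sum_range_zero, abs_of_nonneg hε0] at hseries
  -- `ε/(1-ε)` is the geometric series, whose tail beyond `ε²` dominates the log series' tail
  have hgeom : ε / (1 - ε) = ε + ε ^ 2 + ε ^ 3 / (1 - ε) := by field_simp; ring
  have hremainder := (abs_le.1 hseries).1
  norm_num at hremainder
  rw [hgeom]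
  linarith

theorem measureReal_le_sum_sq_gaussian_le {ι Ω : Type*} [Fintype ι] [MeasurableSpace Ω] {P : Measure Ω}
    [IsProbabilityMeasure P] {X : ι → Ω → ℝ} (hind : iIndepFun X P)
    (hgauss : ∀ i, P.map (X i) = gaussianReal 0 1) {t : ℝ} (ht0 : 0 ≤ t) (ht : t < 1 / 2)
    (a : ℝ) :
    P.real {ω | a ≤ ∑ i, X i ω ^ 2} ≤ exp (-t * a) * (√(1 - 2 * t))⁻¹ ^ Fintype.card ι := by
  have hX : ∀ i, AEMeasurable (X i) P := fun i =>
    aemeasurable_of_map_neZero (by rw [hgauss i]; infer_instance)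
  set Z : ι → Ω → ℝ := fun i => (fun y => y ^ 2) ∘ X i
  have hZind : iIndepFun Z P := hind.comp _ fun _ => measurable_id.pow_const 2
  have hZmgf : ∀ i, mgf (Z i) P t = (√(1 - 2 * t))⁻¹ := fun i => by
    rw [← mgf_map (hX i) (by fun_prop), hgauss i, mgf_sq_gaussianReal ht]
  have hmgf : mgf (∑ i, Z i) P t = (√(1 - 2 * t))⁻¹ ^ Fintype.card ι := by
    rw [hZind.mgf_sum₀ (fun i => (hX i).pow_const 2), Finset.prod_congr rfl fun i _ => hZmgf i,
      Finset.prod_const, Finset.card_univ]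
  have hint : Integrable (fun ω => exp (t * (∑ i, Z i) ω)) P := by
    rw [← mgf_pos_iff, hmgf]
    have h2t : 0 < 1 - 2 * t := by linarith
    positivity
  simpa [Z, hmgf] using measure_ge_le_exp_mul_mgf a ht0 hint

lemma exp_mul_inv_sqrt_pow_le {ε : ℝ} (hε0 : 0 ≤ ε) (hε1 : ε < 1) (d : ℕ) :
    exp (-(ε / 2) * (d / (1 - ε))) * (√(1 - ε))⁻¹ ^ d ≤ exp (-ε ^ 2 * d / 4) := by
  have h1ε : 0 < 1 - ε := by linarith
  have hsqrt : (√(1 - ε))⁻¹ = exp (-log (1 - ε) / 2) := by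
    rw [neg_div, exp_neg, ← log_sqrt h1ε.le, exp_log (sqrt_pos.2 h1ε)]
  rw [hsqrt, ← exp_nat_mul, ← exp_add, exp_le_exp]
  have hlog := mul_le_mul_of_nonneg_left (neg_log_one_sub_le hε0 hε1) (Nat.cast_nonneg d)
  rw [show -(ε / 2) * (d / (1 - ε)) = -(d * (ε / (1 - ε))) / 2 by ring]
  linarith

/-- for a standard Gaussian vector `x` in ℝ^d (independent `N(0,1)`
coordinates) and any `ε ∈ (0,1)`:
`ℙ(‖x‖₂² ≥ d/(1−ε)) ≤ exp(−ε² d / 4)`. -/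
theorem stmt13
    {Ω : Type*} [MeasurableSpace Ω] (P : Measure Ω) [IsProbabilityMeasure P]
    (d : ℕ) (x : Ω → Fin d → ℝ)
    (hind : iIndepFun (fun i ω => x ω i) P)
    (hgauss : ∀ i, Measure.map (fun ω => x ω i) P = gaussianReal 0 1)
    (ε : ℝ) (hε0 : 0 < ε) (hε1 : ε < 1) :
    P {ω | (d : ℝ) / (1 - ε) ≤ ∑ i, (x ω i) ^ 2}
      ≤ ENNReal.ofReal (Real.exp (-ε ^ 2 * d / 4)) := by
  rw [← ofReal_measureReal]
  gcongr
  calc P.real _ ≤ exp (-(ε / 2) * (d / (1 - ε))) * (√(1 - 2 * (ε / 2)))⁻¹ ^ Fintype.card (Fin d) :=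
        measureReal_le_sum_sq_gaussian_le hind hgauss (by positivity) (by linarith) _
    _ = exp (-(ε / 2) * (d / (1 - ε))) * (√(1 - ε))⁻¹ ^ d := by
        rw [Fintype.card_fin, mul_div_cancel₀ ε two_ne_zero]
    _ ≤ exp (-ε ^ 2 * d / 4) := exp_mul_inv_sqrt_pow_le hε0.le hε1 d
end
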